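/- Let 0 < r < 1/(4e), c(κ) ∈ (0, e^{-1}) with log c(κ) ≤ −1 − 2κ for some κ > 0, δ'_p = ⌊(p−2)c(κ)/(2|log r|)⌋ − 2, and 0 < β < 1. Then (1/(p-2)!) ∫_0^{2δ'_p β |log r|} u^{p-2} e^{-u} du = O(e^{-2κp}) as p → ∞; more precisely this quantity is at most C √p · c(κ)β · e^{(p-2)(log(c(κ)β) − c(κ)β + 1)} and log(c(κ)β) − c(κ)β + 1 ≤ −2κ. -/

import Mathlib

/-- `δ'_p = ⌊(p−2)c/(2|log r|)⌋ − 2`, as an integer. -/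
noncomputable def δp' (r c : ℝ) (p : ℕ) : ℤ :=
  ⌊((p : ℝ) - 2) * c / (2 * |Real.log r|)⌋ - 2

/-!
If `0 ≤ T ≤ a m` with `0 < a < 1`, then `x ≤ e^{x-1}` at `x = u / T` gives
`u^m e^{-u} ≤ T^m e^{-T} e^{λ(u-T)}` on `[0, T]` with slope `λ = m/T - 1 ≥ 1/a - 1`, so the
integral is at most `a/(1-a) · T^m e^{-T}`. As `u^m e^{-u}` increases on `[0, m]`,
`T^m e^{-T} ≤ (am)^m e^{-am}`, and `m^m ≤ e^m m!` (in place of Stirling's formula) turns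
`(am)^m e^{-am} / m!` into `e^{m(log a - a + 1)}`. For `a = cβ`, `m = p - 2`, the upper limit
`2δ'_p β|log r|` lies in `[0, a m]` for all large `p`; the finitely many remaining `p` only
enlarge the constant.
-/

open Real Filter Set

lemma pow_mul_exp_neg_le_mul_exp (m : ℕ) {u T : ℝ} (hu : 0 ≤ u) (hT : 0 < T) :
    u ^ m * exp (-u) ≤ T ^ m * exp (-T) * exp ((m / T - 1) * (u - T)) := by
  have hx : u / T ≤ exp (u / T - 1) := by linarith [add_one_le_exp (u / T - 1)]
  calc u ^ m * exp (-u) = T ^ m * (u / T) ^ m * exp (-u) := by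
        rw [div_pow, mul_div_cancel₀ _ (pow_ne_zero m hT.ne')]
    _ ≤ T ^ m * exp (u / T - 1) ^ m * exp (-u) := by gcongr
    _ = T ^ m * exp (-T) * exp ((m / T - 1) * (u - T)) := by
        rw [← exp_nat_mul, mul_assoc, ← exp_add, mul_assoc, ← exp_add]
        congr 2
        field_simp
        ring

lemma monotoneOn_pow_mul_exp_neg (m : ℕ) :
    MonotoneOn (fun u : ℝ => u ^ m * exp (-u)) (Icc 0 m) := by
  intro s ⟨hs, _⟩ t ⟨_, htm⟩ hst
  rcases (hs.trans hst).eq_or_lt with ht | ht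
  · obtain rfl : s = t := by linarith
    rfl
  have hslope : 0 ≤ m / t - 1 := by rw [sub_nonneg, one_le_div ht]; exact htm
  calc s ^ m * exp (-s) ≤ t ^ m * exp (-t) * exp ((m / t - 1) * (s - t)) :=
        pow_mul_exp_neg_le_mul_exp m hs ht
    _ ≤ t ^ m * exp (-t) := by
        refine mul_le_of_le_one_right (by positivity) (exp_le_one_iff.2 ?_)
        exact mul_nonpos_of_nonneg_of_nonpos hslope (by linarith)

lemma integral_exp_mul_sub_le {l : ℝ} (hl : 0 < l) (T : ℝ) :
    ∫ u in (0 : ℝ)..T, exp (l * (u - T)) ≤ l⁻¹ := by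
  simp_rw [mul_sub]
  rw [intervalIntegral.integral_comp_mul_sub _ hl.ne', integral_exp, smul_eq_mul, sub_self,
    exp_zero]
  exact mul_le_of_le_one_right (inv_nonneg.2 hl.le) (by linarith [exp_pos (l * 0 - l * T)])

lemma integral_pow_mul_exp_neg_le {m : ℕ} {a T : ℝ} (ha0 : 0 < a) (ha1 : a < 1) (hT0 : 0 ≤ T)
    (hT : T ≤ a * m) :
    ∫ u in (0 : ℝ)..T, u ^ m * exp (-u) ≤ a / (1 - a) * (T ^ m * exp (-T)) := by
  rcases hT0.eq_or_lt with rfl | hT0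
  · rw [intervalIntegral.integral_same]
    exact mul_nonneg (div_nonneg ha0.le (by linarith)) (by positivity)
  set l := (1 - a) / a
  have hl : 0 < l := div_pos (by linarith) ha0
  have hslope : l ≤ m / T - 1 := by
    have hinv : 1 / a ≤ m / T := by rw [div_le_div_iff₀ ha0 hT0]; linarith
    have hl_eq : l = 1 / a - 1 := by rw [div_sub_one ha0.ne']
    linarith
  calc ∫ u in (0 : ℝ)..T, u ^ m * exp (-u)
      ≤ ∫ u in (0 : ℝ)..T, T ^ m * exp (-T) * exp (l * (u - T)) := by
        refine intervalIntegral.integral_mono_on hT0.le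
          (Continuous.intervalIntegrable (by fun_prop) _ _)
          (Continuous.intervalIntegrable (by fun_prop) _ _) ?_
        rintro u ⟨hu0, huT⟩
        refine (pow_mul_exp_neg_le_mul_exp m hu0 hT0).trans ?_
        gcongr _ * exp ?_
        exact mul_le_mul_of_nonpos_right hslope (by linarith)
    _ ≤ T ^ m * exp (-T) * l⁻¹ := by
        rw [intervalIntegral.integral_const_mul]
        gcongr
        exact integral_exp_mul_sub_le hl T
    _ = a / (1 - a) * (T ^ m * exp (-T)) := by rw [inv_div]; ring

lemma pow_mul_exp_neg_div_factorial_le {a : ℝ} (ha : 0 < a) (m : ℕ) :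
    (a * m) ^ m * exp (-(a * m)) / m.factorial ≤ exp (m * (log a - a + 1)) := by
  have hpow_factorial : (m : ℝ) ^ m / m.factorial ≤ exp m :=
    pow_div_factorial_le_exp (x := m) (by positivity) m
  calc (a * m) ^ m * exp (-(a * m)) / m.factorial
      = a ^ m * exp (-(a * m)) * ((m : ℝ) ^ m / m.factorial) := by ring
    _ ≤ a ^ m * exp (-(a * m)) * exp m := by gcongr
    _ = exp (m * (log a - a + 1)) := by
        rw [← exp_log (pow_pos ha m), log_pow, ← exp_add, ← exp_add]
        ring_nf

theorem incompleteGamma_le {m : ℕ} {a T : ℝ} (ha0 : 0 < a) (ha1 : a < 1) (hT0 : 0 ≤ T)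
    (hT : T ≤ a * m) :
    1 / (m.factorial : ℝ) * ∫ u in (0 : ℝ)..T, u ^ m * exp (-u)
      ≤ a / (1 - a) * exp (m * (log a - a + 1)) := by
  have ham : a * m ≤ m := mul_le_of_le_one_left (Nat.cast_nonneg m) ha1.le
  have hmono : T ^ m * exp (-T) ≤ (a * m) ^ m * exp (-(a * m)) :=
    monotoneOn_pow_mul_exp_neg m ⟨hT0, hT.trans ham⟩ ⟨hT0.trans hT, ham⟩ hT
  have hfrac : 0 ≤ a / (1 - a) := div_nonneg ha0.le (by linarith)
  calc 1 / (m.factorial : ℝ) * ∫ u in (0 : ℝ)..T, u ^ m * exp (-u)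
      ≤ 1 / (m.factorial : ℝ) * (a / (1 - a) * ((a * m) ^ m * exp (-(a * m)))) := by
        gcongr
        exact (integral_pow_mul_exp_neg_le ha0 ha1 hT0 hT).trans (by gcongr)
    _ = a / (1 - a) * ((a * m) ^ m * exp (-(a * m)) / m.factorial) := by ring
    _ ≤ a / (1 - a) * exp (m * (log a - a + 1)) := by
        gcongr
        exact pow_mul_exp_neg_div_factorial_le ha0 m

lemma exists_pos_forall_le_mul_of_eventually {f g : ℕ → ℝ} {D : ℝ} (hg : ∀ n, 0 < g n)
    (h : ∀ᶠ n in atTop, f n ≤ D * g n) : ∃ C > 0, ∀ n, f n ≤ C * g n := by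
  obtain ⟨N, hN⟩ := eventually_atTop.1 h
  set S := ∑ k ∈ Finset.range N, |f k| / g k
  have hS : 0 ≤ S := Finset.sum_nonneg fun k _ => div_nonneg (abs_nonneg _) (hg k).le
  refine ⟨max D 1 + S, by positivity, fun n => ?_⟩
  rcases lt_or_ge n N with hn | hn
  · calc f n ≤ |f n| / g n * g n := by rw [div_mul_cancel₀ _ (hg n).ne']; exact le_abs_self _
      _ ≤ S * g n := mul_le_mul_of_nonneg_right (Finset.single_le_sum
          (fun k _ => div_nonneg (abs_nonneg _) (hg k).le) (Finset.mem_range.2 hn)) (hg n).le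
      _ ≤ (max D 1 + S) * g n := by nlinarith [le_max_right D 1, hg n]
  · calc f n ≤ D * g n := hN n hn
      _ ≤ (max D 1 + S) * g n := by nlinarith [le_max_left D 1, hg n]

lemma δp'_le (r c : ℝ) (p : ℕ) :
    (δp' r c p : ℝ) ≤ ((p : ℝ) - 2) * c / (2 * |log r|) := by
  rw [δp']
  push_cast
  linarith [Int.floor_le (((p : ℝ) - 2) * c / (2 * |log r|))]

lemma δp'_nonneg {r c : ℝ} {p : ℕ} (hr : 0 < |log r|) (hp : 4 * |log r| ≤ ((p : ℝ) - 2) * c) :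
    0 ≤ δp' r c p := by
  have h2 : (2 : ℝ) ≤ ((p : ℝ) - 2) * c / (2 * |log r|) := by
    rw [le_div_iff₀ (by positivity)]; linarith
  rw [δp', sub_nonneg]
  exact Int.le_floor.2 (by exact_mod_cast h2)

lemma eventually_δp'_bounds (r : ℝ) {c β : ℝ} (hc : 0 < c) (hβ : 0 ≤ β) :
    ∀ᶠ p : ℕ in atTop, 0 ≤ 2 * (δp' r c p : ℝ) * β * |log r| ∧
      2 * (δp' r c p : ℝ) * β * |log r| ≤ c * β * ((p : ℝ) - 2) := by
  have hp : ∀ᶠ p : ℕ in atTop, 2 + 4 * |log r| / c ≤ (p : ℝ) :=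
    tendsto_natCast_atTop_atTop.eventually_ge_atTop _
  filter_upwards [hp] with p hp
  have hp2 : 4 * |log r| ≤ ((p : ℝ) - 2) * c := by
    rw [← le_sub_iff_add_le', div_le_iff₀ hc] at hp; exact hp
  rcases (abs_nonneg (log r)).eq_or_lt with hr | hr
  · rw [← hr, mul_zero]
    exact ⟨le_rfl, by nlinarith⟩
  have hδ : (0 : ℝ) ≤ δp' r c p := by exact_mod_cast δp'_nonneg hr hp2
  refine ⟨by positivity, ?_⟩
  calc 2 * (δp' r c p : ℝ) * β * |log r|
      ≤ 2 * (((p : ℝ) - 2) * c / (2 * |log r|)) * β * |log r| := by gcongr; exact δp'_le r c p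
    _ = c * β * ((p : ℝ) - 2) := by field_simp

lemma log_mul_sub_add_one_le {c β κ : ℝ} (hc : 0 < c) (hβ0 : 0 < β) (hβ1 : β < 1)
    (hclog : log c ≤ -1 - 2 * κ) : log (c * β) - c * β + 1 ≤ -2 * κ := by
  rw [log_mul hc.ne' hβ0.ne']
  linarith [log_neg hβ0 hβ1, mul_pos hc hβ0]

theorem stmt18_general (r κ c β : ℝ)
    (hc0 : 0 < c) (hc1 : c < Real.exp (-1))
    (hclog : Real.log c ≤ -1 - 2 * κ) (hβ0 : 0 < β) (hβ1 : β < 1) :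
    Real.log (c * β) - c * β + 1 ≤ -2 * κ ∧
    (∃ C > 0, ∀ p : ℕ, 2 ≤ p →
      (1 / (Nat.factorial (p - 2) : ℝ)) *
          ∫ u in (0:ℝ)..(2 * (δp' r c p : ℝ) * β * |Real.log r|),
            u ^ (p - 2) * Real.exp (-u)
        ≤ C * Real.sqrt p * (c * β) *
            Real.exp (((p : ℝ) - 2) * (Real.log (c * β) - c * β + 1))) ∧
    (∃ C > 0, ∀ p : ℕ, 2 ≤ p →
      (1 / (Nat.factorial (p - 2) : ℝ)) *
          ∫ u in (0:ℝ)..(2 * (δp' r c p : ℝ) * β * |Real.log r|),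
            u ^ (p - 2) * Real.exp (-u)
        ≤ C * Real.exp (-2 * κ * p)) := by
  have hE := log_mul_sub_add_one_le hc0 hβ0 hβ1 hclog
  set a := c * β
  set E := log a - a + 1
  have ha0 : 0 < a := mul_pos hc0 hβ0
  have ha1 : a < 1 :=
    mul_lt_one_of_nonneg_of_lt_one_left hc0.le (hc1.trans (exp_lt_one_iff.2 (by norm_num))) hβ1.le
  obtain ⟨D, hD, hbound⟩ : ∃ D > 0, ∀ p : ℕ,
      (1 / ((p - 2).factorial : ℝ)) *
          ∫ u in (0:ℝ)..(2 * (δp' r c p : ℝ) * β * |log r|), u ^ (p - 2) * exp (-u)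
        ≤ D * exp (((p : ℝ) - 2) * E) := by
    refine exists_pos_forall_le_mul_of_eventually (D := a / (1 - a)) (fun p => exp_pos _) ?_
    filter_upwards [eventually_δp'_bounds r hc0 hβ0.le, eventually_ge_atTop 2]
      with p ⟨hT0, hT⟩ hp
    have hm : ((p - 2 : ℕ) : ℝ) = (p : ℝ) - 2 := by rw [Nat.cast_sub hp, Nat.cast_ofNat]
    rw [← hm] at hT ⊢
    exact incompleteGamma_le ha0 ha1 hT0 hT
  refine ⟨hE, ⟨D / a, div_pos hD ha0, fun p hp => ?_⟩, ⟨D * exp (4 * κ), by positivity, fun p hp => ?_⟩⟩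
  · have hsqrt : 1 ≤ √(p : ℝ) := one_le_sqrt.2 (by exact_mod_cast one_le_two.trans hp)
    calc _ ≤ D * exp (((p : ℝ) - 2) * E) := hbound p
      _ ≤ D / a * √(p : ℝ) * a * exp (((p : ℝ) - 2) * E) := by
        rw [mul_right_comm _ _ a, div_mul_cancel₀ _ ha0.ne']
        gcongr
        exact le_mul_of_one_le_right hD.le hsqrt
  · have hp2 : (0 : ℝ) ≤ (p : ℝ) - 2 := by rw [sub_nonneg]; exact_mod_cast hp
    calc _ ≤ D * exp (((p : ℝ) - 2) * E) := hbound p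
      _ ≤ D * exp (4 * κ + -2 * κ * p) := by gcongr; nlinarith
      _ = D * exp (4 * κ) * exp (-2 * κ * p) := by rw [exp_add]; ring

/-- Refined incomplete-Gamma estimate (3.9): with `log c(κ) ≤ −1−2κ` and
`δ'_p = ⌊(p−2)c(κ)/(2|log r|)⌋ − 2`,
`(1/(p-2)!) ∫_0^{2δ'_pβ|log r|} u^{p-2}e^{-u} du = O(e^{-2κp})`; more precisely this is at
most `C√p·c(κ)β·e^{(p-2)(log(c(κ)β)−c(κ)β+1)}` and `log(c(κ)β)−c(κ)β+1 ≤ −2κ`. -/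
theorem stmt18 (r κ c β : ℝ) (hr0 : 0 < r) (hr1 : r < 1 / (4 * Real.exp 1))
    (hκ : 0 < κ) (hc0 : 0 < c) (hc1 : c < Real.exp (-1))
    (hclog : Real.log c ≤ -1 - 2 * κ) (hβ0 : 0 < β) (hβ1 : β < 1) :
    Real.log (c * β) - c * β + 1 ≤ -2 * κ ∧
    (∃ C > 0, ∀ p : ℕ, 2 ≤ p →
      (1 / (Nat.factorial (p - 2) : ℝ)) *
          ∫ u in (0:ℝ)..(2 * (δp' r c p : ℝ) * β * |Real.log r|),
            u ^ (p - 2) * Real.exp (-u)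
        ≤ C * Real.sqrt p * (c * β) *
            Real.exp (((p : ℝ) - 2) * (Real.log (c * β) - c * β + 1))) ∧
    (∃ C > 0, ∀ p : ℕ, 2 ≤ p →
      (1 / (Nat.factorial (p - 2) : ℝ)) *
          ∫ u in (0:ℝ)..(2 * (δp' r c p : ℝ) * β * |Real.log r|),
            u ^ (p - 2) * Real.exp (-u)
        ≤ C * Real.exp (-2 * κ * p)) :=
  stmt18_general r κ c β hc0 hc1 hclog hβ0 hβ1
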